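/- Let N ≥ 2, α ∈ (0,1), dω(x) = dx/(1+|x|^{N+2α}), p* = N/(N-2α). For a finite positive Borel measure ν on ℝ^N define 𝔾[ν](x) = ∫ c|x-y|^{-(N-2α)} dν(y) with c > 0 fixed. Then there exists C > 0 (independent of ν) such that for every Borel set E ⊂ ℝ^N, ∫_E 𝔾[ν] dω ≤ C ν(ℝ^N) (∫_E dω)^{(p*-1)/p*}. In particular 𝔾[ν] belongs to the Marcinkiewicz (weak L^{p*}) space with respect to ω, with quasi-norm at most C ν(ℝ^N). -/

import Mathlib

/-! The weight `(1 + ‖x‖ ^ (N + 2α))⁻¹` is at most `1`, so `ω ≤ volume`, and by Tonelli it suffices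
to bound `∫_E ‖x - y‖ ^ (-β) dω(x)`, `β = N - 2α`, uniformly in `y`. Split `E` along a ball `B(y, r)`:
inside, compare `ω` with Lebesgue measure and integrate in polar coordinates to get `K r ^ (N - β)`;
outside, the kernel is at most `r ^ (-β)`, which gives `r ^ (-β) ω(E)`. The choice `r ^ N = ω(E)`
makes both terms equal to `ω(E) ^ (1 - β / N)`, and `1 - β / N = (p* - 1) / p*`. -/
open MeasureTheory Metric Set Module

lemma rpow_natCast_pred_mul_rpow_eqOn {n : ℕ} (hn : 0 < n) (s : ℝ) :
    EqOn (fun y : ℝ ↦ y ^ (n - 1) • y ^ s) (fun y ↦ y ^ ((n : ℝ) - 1 + s)) (Ioi 0) := by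
  intro y (hy : 0 < y)
  simp only [smul_eq_mul]
  rw [Real.rpow_add hy, ← Nat.cast_pred hn, Real.rpow_natCast]

variable {E : Type*} [NormedAddCommGroup E] [NormedSpace ℝ E] [FiniteDimensional ℝ E]
  [MeasurableSpace E] [BorelSpace E] [Nontrivial E] (μ : Measure E) [μ.IsAddHaarMeasure]

lemma integrableOn_ball_zero_norm_rpow {s r : ℝ} (hs : -(finrank ℝ E : ℝ) < s) (hr : 0 < r) :
    IntegrableOn (fun x : E ↦ ‖x‖ ^ s) (ball 0 r) μ := by
  rw [integrableOn_fun_norm_addHaar μ (f := (· ^ s)), integrableOn_congr_fun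
      ((rpow_natCast_pred_mul_rpow_eqOn finrank_pos s).mono Ioo_subset_Ioi_self) measurableSet_Ioo,
    intervalIntegral.integrableOn_Ioo_rpow_iff hr]
  linarith

lemma setIntegral_ball_zero_norm_rpow {s r : ℝ} (hs : -(finrank ℝ E : ℝ) < s) (hr : 0 < r) :
    ∫ x in ball (0 : E) r, ‖x‖ ^ s ∂μ =
      finrank ℝ E * μ.real (ball 0 1) / (finrank ℝ E + s) * r ^ (finrank ℝ E + s) := by
  have hball : ∫ x in ball (0 : E) r, ‖x‖ ^ s ∂μ = ∫ x, (Iio r).indicator (· ^ s) ‖x‖ ∂μ := by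
    rw [← integral_indicator measurableSet_ball]
    congr 1 with x
    by_cases hx : ‖x‖ < r <;> simp [indicator, hx]
  have hs' : -1 < (finrank ℝ E : ℝ) - 1 + s := by linarith
  rw [hball, integral_fun_norm_addHaar μ, nsmul_eq_mul, smul_eq_mul]
  simp_rw [← Set.indicator_smul_apply (Iio r) (fun y : ℝ ↦ y ^ (finrank ℝ E - 1))]
  rw [setIntegral_indicator measurableSet_Iio, Ioi_inter_Iio,
    setIntegral_congr_fun measurableSet_Ioo
      ((rpow_natCast_pred_mul_rpow_eqOn finrank_pos s).mono Ioo_subset_Ioi_self),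
    ← integral_Ioc_eq_integral_Ioo, ← intervalIntegral.integral_of_le hr.le,
    integral_rpow (Or.inl hs'), Real.zero_rpow (by linarith)]
  field_simp
  ring_nf

lemma setLIntegral_ball_norm_sub_rpow (y : E) {s r : ℝ} (hs : -(finrank ℝ E : ℝ) < s)
    (hr : 0 < r) :
    ∫⁻ x in ball y r, ENNReal.ofReal (‖x - y‖ ^ s) ∂μ = ENNReal.ofReal
      (finrank ℝ E * μ.real (ball 0 1) / (finrank ℝ E + s) * r ^ (finrank ℝ E + s)) := by
  have hpre : (· - y) ⁻¹' ball 0 r = ball y r := by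
    ext x
    simp [dist_eq_norm]
  rw [← hpre, (measurePreserving_sub_right μ y).setLIntegral_comp_preimage_emb
      (measurableEmbedding_subRight y) (fun x ↦ ENNReal.ofReal (‖x‖ ^ s)),
    ← setIntegral_ball_zero_norm_rpow μ hs hr,
    ofReal_integral_eq_lintegral_ofReal (integrableOn_ball_zero_norm_rpow μ hs hr)
      (.of_forall fun x ↦ Real.rpow_nonneg (norm_nonneg x) s)]

variable {μ} {ω : Measure E} {β : ℝ}

lemma setLIntegral_norm_sub_rpow_neg_le (hω : ω ≤ μ) (s : Set E) (y : E) (hβ : 0 ≤ β)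
    (hβd : β < finrank ℝ E) {r : ℝ} (hr : 0 < r) :
    ∫⁻ x in s, ENNReal.ofReal (‖x - y‖ ^ (-β)) ∂ω ≤
      ENNReal.ofReal (finrank ℝ E * μ.real (ball 0 1) / (finrank ℝ E - β) * r ^ (finrank ℝ E - β))
        + ENNReal.ofReal (r ^ (-β)) * ω s := by
  rw [← lintegral_inter_add_sdiff _ s measurableSet_ball]
  gcongr ?_ + ?_
  · calc ∫⁻ x in s ∩ ball y r, ENNReal.ofReal (‖x - y‖ ^ (-β)) ∂ω
        ≤ ∫⁻ x in ball y r, ENNReal.ofReal (‖x - y‖ ^ (-β)) ∂μ :=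
          lintegral_mono' (Measure.restrict_mono inter_subset_right hω) le_rfl
      _ = _ := by
          rw [setLIntegral_ball_norm_sub_rpow μ y (by linarith) hr, ← sub_eq_add_neg]
  · calc ∫⁻ x in s \ ball y r, ENNReal.ofReal (‖x - y‖ ^ (-β)) ∂ω
        ≤ ∫⁻ _ in s \ ball y r, ENNReal.ofReal (r ^ (-β)) ∂ω := by
          refine setLIntegral_mono measurable_const fun x hx ↦ ?_
          have hxr : r ≤ ‖x - y‖ := by simpa [dist_eq_norm] using hx.2
          exact ENNReal.ofReal_le_ofReal (Real.rpow_le_rpow_of_nonpos hr hxr (by linarith))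
      _ ≤ ENNReal.ofReal (r ^ (-β)) * ω s := by
          rw [setLIntegral_const]
          gcongr
          exact sdiff_subset

lemma setLIntegral_norm_sub_rpow_neg_le_measure_rpow (hω : ω ≤ μ) (s : Set E) (y : E)
    (hβ : 0 ≤ β) (hβd : β < finrank ℝ E) :
    ∫⁻ x in s, ENNReal.ofReal (‖x - y‖ ^ (-β)) ∂ω ≤
      ENNReal.ofReal (finrank ℝ E * μ.real (ball 0 1) / (finrank ℝ E - β) + 1)
        * ω s ^ (1 - β / finrank ℝ E) := by
  set K := (finrank ℝ E : ℝ) * μ.real (ball 0 1) / (finrank ℝ E - β)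
  have hK : 0 ≤ K := div_nonneg (by positivity) (by linarith)
  have he : 0 < 1 - β / finrank ℝ E := by
    rw [sub_pos, div_lt_one (by linarith)]
    exact hβd
  rcases eq_or_ne (ω s) 0 with h0 | h0
  · simp [setLIntegral_measure_zero _ _ h0]
  rcases eq_or_ne (ω s) ⊤ with htop | htop
  · rw [htop, ENNReal.top_rpow_of_pos he, ENNReal.mul_top (by positivity)]
    exact le_top
  have ht : 0 < (ω s).toReal := ENNReal.toReal_pos h0 htop
  set t := (ω s).toReal
  set r := t ^ ((finrank ℝ E : ℝ)⁻¹)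
  have hbalance : K * r ^ ((finrank ℝ E : ℝ) - β) + r ^ (-β) * t
      = (K + 1) * t ^ (1 - β / finrank ℝ E) := by
    have hd : (finrank ℝ E : ℝ) ≠ 0 := Nat.cast_ne_zero.2 finrank_pos.ne'
    rw [← Real.rpow_mul ht.le, ← Real.rpow_mul ht.le]
    nth_rw 3 [← Real.rpow_one t]
    rw [← Real.rpow_add ht,
      show ((finrank ℝ E : ℝ))⁻¹ * (finrank ℝ E - β) = 1 - β / finrank ℝ E by field_simp,
      show ((finrank ℝ E : ℝ))⁻¹ * -β + 1 = 1 - β / finrank ℝ E by field_simp; ring]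
    ring
  calc ∫⁻ x in s, ENNReal.ofReal (‖x - y‖ ^ (-β)) ∂ω
      ≤ ENNReal.ofReal (K * r ^ ((finrank ℝ E : ℝ) - β))
          + ENNReal.ofReal (r ^ (-β)) * ENNReal.ofReal t := by
        rw [ENNReal.ofReal_toReal htop]
        exact setLIntegral_norm_sub_rpow_neg_le hω s y hβ hβd (by positivity)
    _ = ENNReal.ofReal ((K + 1) * t ^ (1 - β / finrank ℝ E)) := by
        rw [← ENNReal.ofReal_mul (by positivity), ← ENNReal.ofReal_add (by positivity)
          (by positivity), hbalance]
    _ = ENNReal.ofReal (K + 1) * ω s ^ (1 - β / finrank ℝ E) := by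
        rw [ENNReal.ofReal_mul (by positivity), ← ENNReal.ofReal_rpow_of_nonneg ht.le he.le,
          ENNReal.ofReal_toReal htop]

theorem setLIntegral_lintegral_norm_sub_rpow_neg_le (hω : ω ≤ μ) (ν : Measure E) [SFinite ν]
    (s : Set E) (hβ : 0 ≤ β) (hβd : β < finrank ℝ E) :
    ∫⁻ x in s, ∫⁻ y, ENNReal.ofReal (‖x - y‖ ^ (-β)) ∂ν ∂ω ≤
      ENNReal.ofReal (finrank ℝ E * μ.real (ball 0 1) / (finrank ℝ E - β) + 1)
        * ν univ * ω s ^ (1 - β / finrank ℝ E) := by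
  have : SigmaFinite ω := Measure.sigmaFinite_of_le μ hω
  have hmeas : Measurable fun p : E × E ↦ ENNReal.ofReal (‖p.1 - p.2‖ ^ (-β)) :=
    ((measurable_fst.sub measurable_snd).norm.pow_const _).ennreal_ofReal
  calc ∫⁻ x in s, ∫⁻ y, ENNReal.ofReal (‖x - y‖ ^ (-β)) ∂ν ∂ω
      = ∫⁻ y, ∫⁻ x in s, ENNReal.ofReal (‖x - y‖ ^ (-β)) ∂ω ∂ν :=
        lintegral_lintegral_swap hmeas.aemeasurable
    _ ≤ ∫⁻ _, ENNReal.ofReal (finrank ℝ E * μ.real (ball 0 1) / (finrank ℝ E - β) + 1)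
          * ω s ^ (1 - β / finrank ℝ E) ∂ν :=
        lintegral_mono fun y ↦ setLIntegral_norm_sub_rpow_neg_le_measure_rpow hω s y hβ hβd
    _ = _ := by rw [lintegral_const]; ring

theorem green_potential_marcinkiewicz (N : ℕ) (hN : 2 ≤ N) (α c : ℝ)
    (hα : α ∈ Set.Ioo (0:ℝ) 1) (hc : 0 < c) :
    ∃ C > 0, ∀ ν : Measure (EuclideanSpace ℝ (Fin N)), IsFiniteMeasure ν →
      ∀ E : Set (EuclideanSpace ℝ (Fin N)), MeasurableSet E →
      (∫⁻ x in E, (∫⁻ y, ENNReal.ofReal (c / ‖x - y‖ ^ ((N:ℝ) - 2*α)) ∂ν)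
          ∂((volume : Measure (EuclideanSpace ℝ (Fin N))).withDensity
            (fun x => ENNReal.ofReal ((1 + ‖x‖ ^ ((N:ℝ) + 2*α))⁻¹))))
        ≤ ENNReal.ofReal C * ν Set.univ *
          (((volume : Measure (EuclideanSpace ℝ (Fin N))).withDensity
            (fun x => ENNReal.ofReal ((1 + ‖x‖ ^ ((N:ℝ) + 2*α))⁻¹))) E)
            ^ (((N:ℝ) / ((N:ℝ) - 2*α) - 1) / ((N:ℝ) / ((N:ℝ) - 2*α))) := by
  obtain ⟨hα0, hα1⟩ := hα
  have hN' : (2 : ℝ) ≤ N := by exact_mod_cast hN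
  have hdim : finrank ℝ (EuclideanSpace ℝ (Fin N)) = N := finrank_euclideanSpace_fin
  have : Nontrivial (EuclideanSpace ℝ (Fin N)) :=
    nontrivial_of_finrank_pos (R := ℝ) (by omega)
  set β := (N : ℝ) - 2 * α
  set ω := (volume : Measure (EuclideanSpace ℝ (Fin N))).withDensity
    fun x ↦ ENNReal.ofReal ((1 + ‖x‖ ^ ((N : ℝ) + 2 * α))⁻¹)
  have hω : ω ≤ volume := by
    refine (withDensity_mono (.of_forall fun x ↦ ?_)).trans_eq withDensity_one
    exact ENNReal.ofReal_le_one.2 (inv_le_one_of_one_le₀ (le_add_of_nonneg_right (by positivity)))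
  set K := (N : ℝ) * volume.real (ball (0 : EuclideanSpace ℝ (Fin N)) 1) / (N - β)
  have hK : 0 ≤ K := div_nonneg (by positivity) (by linarith)
  refine ⟨c * (K + 1), by positivity, fun ν _ E _ ↦ ?_⟩
  have hkernel (x y : EuclideanSpace ℝ (Fin N)) :
      ENNReal.ofReal (c / ‖x - y‖ ^ β) = ENNReal.ofReal c * ENNReal.ofReal (‖x - y‖ ^ (-β)) := by
    rw [Real.rpow_neg (norm_nonneg _), ← ENNReal.ofReal_mul hc.le, div_eq_mul_inv]
  have hβ : 0 < β := by linarith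
  have hexp : ((N : ℝ) / β - 1) / (N / β) = 1 - β / N := by
    field_simp
  have hbound := setLIntegral_lintegral_norm_sub_rpow_neg_le (β := β) hω ν E hβ.le
    (by rw [hdim]; linarith)
  rw [hdim] at hbound
  simp_rw [hkernel, lintegral_const_mul' _ _ ENNReal.ofReal_ne_top]
  calc _ ≤ ENNReal.ofReal c * (ENNReal.ofReal (K + 1) * ν univ * ω E ^ (1 - β / N)) := by
        gcongr
    _ = _ := by rw [hexp, ENNReal.ofReal_mul hc.le]; ring
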